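/- Let m, n, w, d, l be natural numbers with 1 ≤ w ≤ m, l ≥ 1, and let n_0 > n_1 > ⋯ > n_{l−1} be a strictly decreasing sequence of positive integers with n_0 = n such that for every 0 ≤ i ≤ l−1: n_i divides n·w, n_i ≤ n, and n·w/m ≤ n_i, and for every 1 ≤ i ≤ l−1: n_i·(n·w) ≤ (n·w − d)·n_{i−1}. Set w_i = n·w/n_i. Then Σ_{i=0}^{l−1} B(n, n_i, d)·A(m, n_i, w_i, d) ≤ B(m·n, n·w, d). -/

import Mathlib

open Finset

/-- Total Hamming distance between two words in `J(m,w)^n`: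
the number of positions (among all `m·n` entries) in which they differ. -/
def arrDist {m n : ℕ} (X Y : Fin n → Fin m → ZMod 2) : ℕ :=
  ∑ k, hammingDist (X k) (Y k)

/-- `C` is a constant-weight array code in `J(m,w)^n` with minimum distance `2d`. -/
def isCWAC (m n w d : ℕ) (C : Finset (Fin n → Fin m → ZMod 2)) : Prop :=
  C.Nonempty ∧ (∀ X ∈ C, ∀ k, hammingNorm (X k) = w) ∧
    ∀ X ∈ C, ∀ Y ∈ C, X ≠ Y → 2 * d ≤ arrDist X Y

/-- Maximum cardinality of a CWAC in `J(m,w)^n` with minimum Hamming distance `2d`. -/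
noncomputable def Amax (m n w d : ℕ) : ℕ :=
  sSup { c | ∃ C : Finset (Fin n → Fin m → ZMod 2), isCWAC m n w d C ∧ C.card = c }

/-- Maximum cardinality of an anticode in `J(m,w)^n` with diameter `2δ`. -/
noncomputable def alphaMax (m n w δ : ℕ) : ℕ :=
  sSup { c | ∃ C : Finset (Fin n → Fin m → ZMod 2), C.Nonempty ∧
    (∀ X ∈ C, ∀ k, hammingNorm (X k) = w) ∧
    (∀ X ∈ C, ∀ Y ∈ C, arrDist X Y ≤ 2 * δ) ∧ C.card = c }

/-- Maximum cardinality of a binary constant-weight code in `J(n,w)` with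
minimum Hamming distance `2d`. -/
noncomputable def Bmax (n w d : ℕ) : ℕ :=
  sSup { c | ∃ C : Finset (Fin n → ZMod 2), C.Nonempty ∧
    (∀ x ∈ C, hammingNorm x = w) ∧
    (∀ x ∈ C, ∀ y ∈ C, x ≠ y → 2 * d ≤ hammingDist x y) ∧ C.card = c }

/-- Maximum cardinality of a nonrestricted `q`-ary code of length `n` with
minimum Hamming distance `d`. -/
noncomputable def Cmax (q n d : ℕ) : ℕ :=
  sSup { c | ∃ C : Finset (Fin n → Fin q), C.Nonempty ∧
    (∀ x ∈ C, ∀ y ∈ C, x ≠ y → d ≤ hammingDist x y) ∧ C.card = c }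

/-- `ν(i)`: the number of vectors of weight `u` at Hamming distance `i` from a
fixed vector of weight `w` in `GF(2)^m`. -/
def nuF (m w u : ℕ) (i : ℕ) : ℕ :=
  if (u + w - i) % 2 = 0 ∧ i ≤ u + w ∧ w ≤ u + i then
    Nat.choose w ((u + w - i) / 2) * Nat.choose (m - w) ((u + i - w) / 2)
  else 0


/-!
For each level `i` take an optimal binary code of weight `nᵢ` and an optimal array code in
`J(m, wᵢ)^{nᵢ}`, and place the columns of each array word on the support of each binary word.
All resulting `n`-column arrays have total weight `nᵢ wᵢ = n w`. Two arrays of one level are at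
distance `d(X, Y) ≥ 2d` (same support) or at least `wᵢ · d(x, y) ≥ 2d`. Arrays of levels
`i < j` have at most `wᵢ nⱼ ≤ n w - d` common ones, by the step condition, so they are at
distance at least `2d`. Distinct levels are disjoint since `nᵢ` is the number of nonzero columns.
-/

open Function

lemma zmod_two_eq_of_eq_zero_iff : ∀ {a b : ZMod 2}, (a = 0 ↔ b = 0) → a = b := by decide

section Extremal

variable {α : Type*} [Fintype α]

lemma exists_card_eq_sSup_card (Q : Finset α → Prop) :
    ∃ C : Finset α, (C = ∅ ∨ Q C) ∧ #C = sSup {c | ∃ C, Q C ∧ #C = c} := by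
  rcases Set.eq_empty_or_nonempty {c | ∃ C : Finset α, Q C ∧ #C = c} with hS | hS
  · exact ⟨∅, Or.inl rfl, by simp [hS]⟩
  · have hbdd : BddAbove {c | ∃ C : Finset α, Q C ∧ #C = c} :=
      ⟨Fintype.card α, by rintro c ⟨C, -, rfl⟩; exact card_le_univ C⟩
    obtain ⟨C, hC, hcard⟩ := Nat.sSup_mem hS hbdd
    exact ⟨C, Or.inr hC, hcard⟩

lemma card_le_sSup_card {Q : Finset α → Prop} {C : Finset α} (hC : Q C) :
    #C ≤ sSup {c | ∃ C, Q C ∧ #C = c} :=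
  le_csSup ⟨Fintype.card α, by rintro c ⟨C, -, rfl⟩; exact card_le_univ C⟩ ⟨C, hC, rfl⟩

end Extremal

lemma exists_card_eq_Bmax (n w d : ℕ) :
    ∃ D : Finset (Fin n → ZMod 2), (∀ x ∈ D, hammingNorm x = w) ∧
      (∀ x ∈ D, ∀ y ∈ D, x ≠ y → 2 * d ≤ hammingDist x y) ∧ #D = Bmax n w d := by
  obtain ⟨D, hD, hcard⟩ := exists_card_eq_sSup_card fun D : Finset (Fin n → ZMod 2) =>
    D.Nonempty ∧ (∀ x ∈ D, hammingNorm x = w) ∧ ∀ x ∈ D, ∀ y ∈ D, x ≠ y → 2 * d ≤ hammingDist x y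
  refine ⟨D, ?_⟩
  rcases hD with rfl | ⟨-, hw, hd⟩
  · simpa [Bmax, and_assoc] using hcard
  · exact ⟨hw, hd, by simpa [Bmax, and_assoc] using hcard⟩

lemma exists_card_eq_Amax (m n w d : ℕ) :
    ∃ C : Finset (Fin n → Fin m → ZMod 2), (∀ X ∈ C, ∀ k, hammingNorm (X k) = w) ∧
      (∀ X ∈ C, ∀ Y ∈ C, X ≠ Y → 2 * d ≤ arrDist X Y) ∧ #C = Amax m n w d := by
  obtain ⟨C, hC, hcard⟩ := exists_card_eq_sSup_card (isCWAC m n w d)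
  refine ⟨C, ?_⟩
  rcases hC with rfl | ⟨-, hw, hd⟩
  · simpa [Amax] using hcard
  · exact ⟨hw, hd, hcard⟩

lemma card_le_Bmax {n w d : ℕ} {D : Finset (Fin n → ZMod 2)} (hw : ∀ x ∈ D, hammingNorm x = w)
    (hd : ∀ x ∈ D, ∀ y ∈ D, x ≠ y → 2 * d ≤ hammingDist x y) : #D ≤ Bmax n w d := by
  rcases D.eq_empty_or_nonempty with rfl | hD
  · simp
  · have := card_le_sSup_card (Q := fun D : Finset (Fin n → ZMod 2) =>
      D.Nonempty ∧ (∀ x ∈ D, hammingNorm x = w) ∧ ∀ x ∈ D, ∀ y ∈ D, x ≠ y → 2 * d ≤ hammingDist x y)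
      ⟨hD, hw, hd⟩
    simpa [Bmax, and_assoc] using this

section Arrays

variable {m n : ℕ}

lemma arrDist_comm (X Y : Fin n → Fin m → ZMod 2) : arrDist X Y = arrDist Y X := by
  simp [arrDist, hammingDist_comm]

lemma sum_hammingNorm_add_le_arrDist {u : ℕ} {W W' : Fin n → Fin m → ZMod 2}
    (hW : ∀ k, hammingNorm (W k) ≤ u) :
    ∑ k, hammingNorm (W k) + ∑ k, hammingNorm (W' k) ≤
      arrDist W W' + 2 * (u * #{k | W' k ≠ 0}) := by
  have hcol : ∀ k, hammingNorm (W k) + hammingNorm (W' k) ≤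
      hammingDist (W k) (W' k) + 2 * (if W' k ≠ 0 then u else 0) := by
    intro k
    split_ifs with hk
    · have htri := hammingDist_triangle (W' k) (W k) 0
      rw [hammingDist_zero_right, hammingDist_zero_right, hammingDist_comm] at htri
      linarith [hW k]
    · simp [not_not.mp hk]
  calc ∑ k, hammingNorm (W k) + ∑ k, hammingNorm (W' k)
      ≤ ∑ k, (hammingDist (W k) (W' k) + 2 * (if W' k ≠ 0 then u else 0)) := by
        rw [← sum_add_distrib]; exact sum_le_sum fun k _ => hcol k
    _ = arrDist W W' + 2 * (u * #{k | W' k ≠ 0}) := by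
        rw [sum_add_distrib, ← mul_sum, sum_ite, sum_const, sum_const_zero, smul_eq_mul,
          mul_comm u, add_zero, arrDist]

def flat (X : Fin n → Fin m → ZMod 2) : Fin (m * n) → ZMod 2 :=
  fun p => X (finProdFinEquiv.symm p).2 (finProdFinEquiv.symm p).1

lemma flat_injective : Injective (flat : (Fin n → Fin m → ZMod 2) → _) := by
  intro X Y h
  funext k j
  simpa [flat] using congrFun h (finProdFinEquiv (j, k))

lemma hammingDist_flat (X Y : Fin n → Fin m → ZMod 2) :
    hammingDist (flat X) (flat Y) = arrDist X Y := by
  simp only [hammingDist, arrDist, card_filter]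
  rw [← Equiv.sum_comp finProdFinEquiv, Fintype.sum_prod_type, sum_comm]
  simp [flat]

lemma hammingNorm_flat (X : Fin n → Fin m → ZMod 2) :
    hammingNorm (flat X) = ∑ k, hammingNorm (X k) := by
  rw [← hammingDist_zero_right, show (0 : Fin (m * n) → ZMod 2) = flat 0 from rfl,
    hammingDist_flat, arrDist]
  simp

lemma card_le_Bmax_of_arrDist {N d : ℕ} {E : Finset (Fin n → Fin m → ZMod 2)}
    (hN : ∀ W ∈ E, ∑ k, hammingNorm (W k) = N)
    (hd : ∀ W ∈ E, ∀ W' ∈ E, W ≠ W' → 2 * d ≤ arrDist W W') : #E ≤ Bmax (m * n) N d := by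
  rw [← card_image_of_injective E flat_injective]
  refine card_le_Bmax ?_ ?_
  · simpa [hammingNorm_flat] using hN
  · simp only [mem_image]
    rintro _ ⟨W, hW, rfl⟩ _ ⟨W', hW', rfl⟩ hne
    rw [hammingDist_flat]
    exact hd W hW W' hW' (ne_of_apply_ne flat hne)

end Arrays

lemma sum_extend_zero {ι κ β : Type*} [Fintype ι] [Fintype κ] [Zero β] {e : ι → κ}
    (he : Injective e) (f : β → β → ℕ) (hf : f 0 0 = 0) (X Y : ι → β) :
    ∑ k, f (extend e X 0 k) (extend e Y 0 k) = ∑ j, f (X j) (Y j) :=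
  (Fintype.sum_of_injective e he _ _
    (fun k hk => by simp [extend_apply' _ _ _ fun ⟨j, hj⟩ => hk ⟨j, hj⟩, hf])
    (fun j => by simp [he.extend_apply])).symm

section Spread

variable {m n s u : ℕ} {x y : Fin n → ZMod 2}

def supportEmb (hx : hammingNorm x = s) : Fin s ↪o Fin n :=
  ({k | x k ≠ 0} : Finset _).orderEmbOfFin hx

lemma range_supportEmb (hx : hammingNorm x = s) : Set.range (supportEmb hx) = {k | x k ≠ 0} := by
  simp [supportEmb, range_orderEmbOfFin]

/-- The columns of `X` placed in order on the support of `x`, zero columns elsewhere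
(the zero array unless `x` has weight `s`). -/
noncomputable def spread (x : Fin n → ZMod 2) (X : Fin s → Fin m → ZMod 2) :
    Fin n → Fin m → ZMod 2 :=
  if h : hammingNorm x = s then extend (supportEmb h) X 0 else 0

lemma spread_apply_of_eq_zero (X : Fin s → Fin m → ZMod 2) {k : Fin n} (hk : x k = 0) :
    spread x X k = 0 := by
  unfold spread
  split_ifs with hx
  · refine extend_apply' _ _ _ ?_
    rintro ⟨j, rfl⟩
    have hj : supportEmb hx j ∈ Set.range (supportEmb hx) := Set.mem_range_self j
    rw [range_supportEmb hx] at hj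
    exact hj hk
  · rfl

lemma spread_apply_supportEmb (hx : hammingNorm x = s) (X : Fin s → Fin m → ZMod 2)
    (j : Fin s) : spread x X (supportEmb hx j) = X j := by
  rw [spread, dif_pos hx, (supportEmb hx).injective.extend_apply]

lemma exists_spread_apply_eq (hx : hammingNorm x = s) (X : Fin s → Fin m → ZMod 2) {k : Fin n}
    (hk : x k ≠ 0) : ∃ j, spread x X k = X j := by
  obtain ⟨j, rfl⟩ : k ∈ Set.range (supportEmb hx) := by
    rwa [range_supportEmb hx]
  exact ⟨j, spread_apply_supportEmb hx X j⟩

lemma hammingNorm_spread_apply (hx : hammingNorm x = s) {X : Fin s → Fin m → ZMod 2}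
    (hX : ∀ j, hammingNorm (X j) = u) (k : Fin n) :
    hammingNorm (spread x X k) = if x k = 0 then 0 else u := by
  split_ifs with hk
  · simp [spread_apply_of_eq_zero X hk]
  · obtain ⟨j, hj⟩ := exists_spread_apply_eq hx X hk
    rw [hj, hX]

lemma arrDist_spread (hx : hammingNorm x = s) (X Y : Fin s → Fin m → ZMod 2) :
    arrDist (spread x X) (spread x Y) = arrDist X Y := by
  rw [spread, spread, dif_pos hx, dif_pos hx]
  exact sum_extend_zero (supportEmb hx).injective hammingDist (hammingDist_self 0) X Y

lemma spread_apply_eq_zero_iff (hx : hammingNorm x = s) {X : Fin s → Fin m → ZMod 2}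
    (hX : ∀ j, hammingNorm (X j) = u) (hu : 0 < u) (k : Fin n) :
    spread x X k = 0 ↔ x k = 0 := by
  rw [← hammingNorm_eq_zero, hammingNorm_spread_apply hx hX]
  split_ifs with hk <;> simp [hk, hu.ne']

lemma sum_hammingNorm_spread (hx : hammingNorm x = s) {X : Fin s → Fin m → ZMod 2}
    (hX : ∀ j, hammingNorm (X j) = u) : ∑ k, hammingNorm (spread x X k) = s * u := by
  simp_rw [hammingNorm_spread_apply hx hX]
  rw [sum_ite, sum_const_zero, sum_const, smul_eq_mul, zero_add, ← hx]
  rfl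

lemma card_filter_spread_ne_zero (hx : hammingNorm x = s) {X : Fin s → Fin m → ZMod 2}
    (hX : ∀ j, hammingNorm (X j) = u) (hu : 0 < u) : #{k | spread x X k ≠ 0} = s := by
  simp_rw [ne_eq, spread_apply_eq_zero_iff hx hX hu]
  exact hx

lemma spread_inj (hx : hammingNorm x = s) (hy : hammingNorm y = s) {X Y : Fin s → Fin m → ZMod 2}
    (hX : ∀ j, hammingNorm (X j) = u) (hY : ∀ j, hammingNorm (Y j) = u) (hu : 0 < u) :
    spread x X = spread y Y ↔ x = y ∧ X = Y := by
  refine ⟨fun h => ?_, fun ⟨hxy, hXY⟩ => hxy ▸ hXY ▸ rfl⟩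
  obtain rfl : x = y := funext fun k => zmod_two_eq_of_eq_zero_iff <| by
    rw [← spread_apply_eq_zero_iff hx hX hu, ← spread_apply_eq_zero_iff hy hY hu, h]
  exact ⟨rfl, funext fun j => by rw [← spread_apply_supportEmb hx X j, h, spread_apply_supportEmb]⟩

lemma mul_hammingDist_le_arrDist_spread (hx : hammingNorm x = s) (hy : hammingNorm y = s)
    {X Y : Fin s → Fin m → ZMod 2} (hX : ∀ j, hammingNorm (X j) = u)
    (hY : ∀ j, hammingNorm (Y j) = u) :
    u * hammingDist x y ≤ arrDist (spread x X) (spread y Y) := by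
  have hcol : ∀ k, (if x k ≠ y k then u else 0) ≤ hammingDist (spread x X k) (spread y Y k) := by
    intro k
    split_ifs with hk
    · -- over `ZMod 2`, exactly one of two distinct entries vanishes
      have hzero := mt zmod_two_eq_of_eq_zero_iff hk
      by_cases hxk : x k = 0
      · rw [spread_apply_of_eq_zero X hxk, hammingDist_comm, hammingDist_zero_right,
          hammingNorm_spread_apply hy hY, if_neg (by tauto)]
      · rw [spread_apply_of_eq_zero Y (by tauto), hammingDist_zero_right,
          hammingNorm_spread_apply hx hX, if_neg hxk]
    · exact Nat.zero_le _
  calc u * hammingDist x y = ∑ k, if x k ≠ y k then u else 0 := by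
        rw [sum_ite, sum_const_zero, sum_const, smul_eq_mul, add_zero, mul_comm]
        rfl
    _ ≤ arrDist (spread x X) (spread y Y) := sum_le_sum fun k _ => hcol k

lemma two_mul_le_arrDist_spread {t v d : ℕ} (hx : hammingNorm x = s) (hy : hammingNorm y = t)
    {X : Fin s → Fin m → ZMod 2} {Y : Fin t → Fin m → ZMod 2}
    (hX : ∀ j, hammingNorm (X j) = u) (hY : ∀ j, hammingNorm (Y j) = v) (hv : 0 < v)
    (hweight : t * v = s * u) (h : u * t + d ≤ s * u) :
    2 * d ≤ arrDist (spread x X) (spread y Y) := by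
  have key := sum_hammingNorm_add_le_arrDist (W' := spread y Y) (u := u)
    fun k => (hammingNorm_spread_apply hx hX k).trans_le (by split_ifs <;> omega)
  rw [sum_hammingNorm_spread hx hX, sum_hammingNorm_spread hy hY,
    card_filter_spread_ne_zero hy hY hv] at key
  omega

end Spread

section LevelCode

variable {m n s u d : ℕ}

noncomputable def levelCode (D : Finset (Fin n → ZMod 2)) (C : Finset (Fin s → Fin m → ZMod 2)) :
    Finset (Fin n → Fin m → ZMod 2) :=
  (D ×ˢ C).image fun p => spread p.1 p.2

variable {D : Finset (Fin n → ZMod 2)} {C : Finset (Fin s → Fin m → ZMod 2)}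

lemma mem_levelCode {W : Fin n → Fin m → ZMod 2} :
    W ∈ levelCode D C ↔ ∃ x ∈ D, ∃ X ∈ C, spread x X = W := by
  simp [levelCode, and_assoc]

lemma card_levelCode (hD : ∀ x ∈ D, hammingNorm x = s) (hC : ∀ X ∈ C, ∀ j, hammingNorm (X j) = u)
    (hu : 0 < u) : #(levelCode D C) = #D * #C := by
  rw [levelCode, card_image_of_injOn, card_product]
  rintro ⟨x, X⟩ hp ⟨y, Y⟩ hq h
  simp only [coe_product, Set.mem_prod, mem_coe] at hp hq
  exact Prod.ext_iff.2 ((spread_inj (hD x hp.1) (hD y hq.1) (hC X hp.2) (hC Y hq.2) hu).1 h)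

lemma sum_hammingNorm_of_mem_levelCode (hD : ∀ x ∈ D, hammingNorm x = s)
    (hC : ∀ X ∈ C, ∀ j, hammingNorm (X j) = u) {W : Fin n → Fin m → ZMod 2}
    (hW : W ∈ levelCode D C) : ∑ k, hammingNorm (W k) = s * u := by
  obtain ⟨x, hx, X, hX, rfl⟩ := mem_levelCode.1 hW
  exact sum_hammingNorm_spread (hD x hx) (hC X hX)

lemma card_filter_ne_zero_of_mem_levelCode (hD : ∀ x ∈ D, hammingNorm x = s)
    (hC : ∀ X ∈ C, ∀ j, hammingNorm (X j) = u) (hu : 0 < u) {W : Fin n → Fin m → ZMod 2}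
    (hW : W ∈ levelCode D C) : #{k | W k ≠ 0} = s := by
  obtain ⟨x, hx, X, hX, rfl⟩ := mem_levelCode.1 hW
  exact card_filter_spread_ne_zero (hD x hx) (hC X hX) hu

lemma two_mul_le_arrDist_of_mem_levelCode (hD : ∀ x ∈ D, hammingNorm x = s)
    (hDd : ∀ x ∈ D, ∀ y ∈ D, x ≠ y → 2 * d ≤ hammingDist x y)
    (hC : ∀ X ∈ C, ∀ j, hammingNorm (X j) = u)
    (hCd : ∀ X ∈ C, ∀ Y ∈ C, X ≠ Y → 2 * d ≤ arrDist X Y) (hu : 0 < u) :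
    ∀ W ∈ levelCode D C, ∀ W' ∈ levelCode D C, W ≠ W' → 2 * d ≤ arrDist W W' := by
  simp only [mem_levelCode]
  rintro _ ⟨x, hx, X, hX, rfl⟩ _ ⟨y, hy, Y, hY, rfl⟩ hne
  by_cases hxy : x = y
  · subst hxy
    rw [arrDist_spread (hD x hx)]
    exact hCd X hX Y hY fun h => hne (h ▸ rfl)
  · calc 2 * d ≤ u * hammingDist x y := (hDd x hx y hy hxy).trans (Nat.le_mul_of_pos_left _ hu)
      _ ≤ arrDist (spread x X) (spread y Y) :=
        mul_hammingDist_le_arrDist_spread (hD x hx) (hD y hy) (hC X hX) (hC Y hY)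

lemma two_mul_le_arrDist_of_mem_levelCode_of_mem_levelCode {t v : ℕ}
    {D' : Finset (Fin n → ZMod 2)} {C' : Finset (Fin t → Fin m → ZMod 2)}
    (hD : ∀ x ∈ D, hammingNorm x = s) (hC : ∀ X ∈ C, ∀ j, hammingNorm (X j) = u)
    (hD' : ∀ x ∈ D', hammingNorm x = t) (hC' : ∀ X ∈ C', ∀ j, hammingNorm (X j) = v)
    (hv : 0 < v) (hweight : t * v = s * u) (h : u * t + d ≤ s * u) :
    ∀ W ∈ levelCode D C, ∀ W' ∈ levelCode D' C', 2 * d ≤ arrDist W W' := by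
  simp only [mem_levelCode]
  rintro _ ⟨x, hx, X, hX, rfl⟩ _ ⟨y, hy, Y, hY, rfl⟩
  exact two_mul_le_arrDist_spread (hD x hx) (hD' y hy) (hC X hX) (hC' Y hY) hv hweight h

end LevelCode

lemma sum_card_mul_card_le_Bmax {m n l N d : ℕ} {s u : ℕ → ℕ}
    {D : ℕ → Finset (Fin n → ZMod 2)} {C : ∀ i, Finset (Fin (s i) → Fin m → ZMod 2)}
    (hD : ∀ i < l, ∀ x ∈ D i, hammingNorm x = s i)
    (hDd : ∀ i < l, ∀ x ∈ D i, ∀ y ∈ D i, x ≠ y → 2 * d ≤ hammingDist x y)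
    (hC : ∀ i < l, ∀ X ∈ C i, ∀ j, hammingNorm (X j) = u i)
    (hCd : ∀ i < l, ∀ X ∈ C i, ∀ Y ∈ C i, X ≠ Y → 2 * d ≤ arrDist X Y)
    (hu : ∀ i < l, 0 < u i) (hN : ∀ i < l, s i * u i = N)
    (hanti : ∀ i j, i < j → j < l → s j < s i)
    (hcross : ∀ i j, i < j → j < l → u i * s j + d ≤ N) :
    ∑ i ∈ range l, #(D i) * #(C i) ≤ Bmax (m * n) N d := by
  have hdisj : (range l : Set ℕ).PairwiseDisjoint fun i => levelCode (D i) (C i) := by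
    intro i hi j hj hij
    simp only [coe_range, Set.mem_Iio] at hi hj
    refine disjoint_left.2 fun W hWi hWj => ?_
    have hs := (card_filter_ne_zero_of_mem_levelCode (hD i hi) (hC i hi) (hu i hi) hWi).symm.trans
      (card_filter_ne_zero_of_mem_levelCode (hD j hj) (hC j hj) (hu j hj) hWj)
    rcases hij.lt_or_gt with h | h
    · exact (hanti i j h hj).ne hs.symm
    · exact (hanti j i h hi).ne hs
  have hcross' : ∀ i j, i < j → j < l →
      ∀ W ∈ levelCode (D i) (C i), ∀ W' ∈ levelCode (D j) (C j), 2 * d ≤ arrDist W W' :=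
    fun i j hij hj =>
      have hi := hij.trans hj
      two_mul_le_arrDist_of_mem_levelCode_of_mem_levelCode (hD i hi) (hC i hi) (hD j hj)
        (hC j hj) (hu j hj) (by rw [hN i hi, hN j hj]) (by rw [hN i hi]; exact hcross i j hij hj)
  calc ∑ i ∈ range l, #(D i) * #(C i) = ∑ i ∈ range l, #(levelCode (D i) (C i)) :=
        sum_congr rfl fun i hi => by
          rw [mem_range] at hi
          rw [card_levelCode (hD i hi) (hC i hi) (hu i hi)]
    _ = #((range l).biUnion fun i => levelCode (D i) (C i)) := (card_biUnion hdisj).symm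
    _ ≤ Bmax (m * n) N d := card_le_Bmax_of_arrDist ?_ ?_
  · simp only [mem_biUnion, mem_range]
    rintro W ⟨i, hi, hW⟩
    rw [sum_hammingNorm_of_mem_levelCode (hD i hi) (hC i hi) hW, hN i hi]
  · simp only [mem_biUnion, mem_range]
    rintro W ⟨i, hi, hW⟩ W' ⟨j, hj, hW'⟩ hne
    rcases lt_trichotomy i j with hij | rfl | hij
    · exact hcross' i j hij hj W hW W' hW'
    · exact two_mul_le_arrDist_of_mem_levelCode (hD i hi) (hDd i hi) (hC i hi) (hCd i hi)
        (hu i hi) W hW W' hW' hne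
    · rw [arrDist_comm]
      exact hcross' j i hij hi W' hW' W hW

lemma div_mul_add_le_of_step {N d l : ℕ} {ns : ℕ → ℕ} (hN : 0 < N) (hpos : ∀ i < l, 1 ≤ ns i)
    (hanti : ∀ i j, i < j → j < l → ns j < ns i) (hdvd : ∀ i < l, ns i ∣ N)
    (hstep : ∀ i, 1 ≤ i → i < l → ns i * N ≤ (N - d) * ns (i - 1))
    {i j : ℕ} (hij : i < j) (hj : j < l) : N / ns i * ns j + d ≤ N := by
  have hi : i < l := hij.trans hj
  have hprev : ns (j - 1) ≤ ns i := by
    rcases (Nat.le_sub_one_of_lt hij).lt_or_eq with h | h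
    · exact (hanti i (j - 1) h (by omega)).le
    · rw [h]
  have hbound : ns j * N ≤ (N - d) * ns i :=
    (hstep j (by omega) hj).trans (Nat.mul_le_mul_left _ hprev)
  have hd : d < N := by
    by_contra! h
    rw [Nat.sub_eq_zero_of_le h, zero_mul] at hbound
    have := Nat.mul_pos (hpos j hj) hN
    omega
  have hle : N / ns i * ns j ≤ N - d := by
    refine Nat.le_of_mul_le_mul_right ?_ (hpos i hi)
    calc N / ns i * ns j * ns i = ns j * (ns i * (N / ns i)) := by ring
      _ = ns j * N := by rw [Nat.mul_div_cancel' (hdvd i hi)]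
      _ ≤ (N - d) * ns i := hbound
  omega

theorem refined_upper_bound_CWAC_general (m n w d l : ℕ) (hw : 1 ≤ w)
    (ns : ℕ → ℕ)
    (hpos : ∀ i < l, 1 ≤ ns i)
    (hanti : ∀ i, ∀ j, i < j → j < l → ns j < ns i)
    (hdvd : ∀ i < l, ns i ∣ n * w)
    (hle : ∀ i < l, ns i ≤ n)
    (hstep : ∀ i, 1 ≤ i → i < l → ns i * (n * w) ≤ (n * w - d) * ns (i - 1)) :
    ∑ i ∈ Finset.range l, Bmax n (ns i) d * Amax m (ns i) (n * w / ns i) d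
      ≤ Bmax (m * n) (n * w) d := by
  choose D hD hDd hDcard using fun i => exists_card_eq_Bmax n (ns i) d
  choose C hC hCd hCcard using fun i => exists_card_eq_Amax m (ns i) (n * w / ns i) d
  have hnw : ∀ i < l, ns i ≤ n * w := fun i hi => (hle i hi).trans (Nat.le_mul_of_pos_right n hw)
  simp only [← hDcard, ← hCcard]
  exact sum_card_mul_card_le_Bmax (fun i _ => hD i) (fun i _ => hDd i) (fun i _ => hC i)
    (fun i _ => hCd i) (fun i hi => Nat.div_pos (hnw i hi) (hpos i hi))
    (fun i hi => Nat.mul_div_cancel' (hdvd i hi)) hanti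
    fun i j hij hj => div_mul_add_le_of_step ((hpos i (hij.trans hj)).trans (hnw i (hij.trans hj)))
      hpos hanti hdvd hstep hij hj

theorem refined_upper_bound_CWAC (m n w d l : ℕ) (hw : 1 ≤ w) (hwm : w ≤ m)
    (hl : 1 ≤ l) (ns : ℕ → ℕ) (h0 : ns 0 = n)
    (hpos : ∀ i < l, 1 ≤ ns i)
    (hanti : ∀ i, ∀ j, i < j → j < l → ns j < ns i)
    (hdvd : ∀ i < l, ns i ∣ n * w)
    (hle : ∀ i < l, ns i ≤ n)
    (hge : ∀ i < l, n * w ≤ m * ns i)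
    (hstep : ∀ i, 1 ≤ i → i < l → ns i * (n * w) ≤ (n * w - d) * ns (i - 1)) :
    ∑ i ∈ Finset.range l, Bmax n (ns i) d * Amax m (ns i) (n * w / ns i) d
      ≤ Bmax (m * n) (n * w) d :=
  refined_upper_bound_CWAC_general m n w d l hw ns hpos hanti hdvd hle hstep
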